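/- arXiv:1306.5517 — 3 statements merged into one kernel-verified Lean document; each statement's English description precedes it below -/
import Mathlib

section
/- Suppose x·w(x) > 0 for a.e. x ∈ [−1,1], and let ε₁ > 0 be any number such that 8‖q₋‖₁²·m₁(ε₁) < 1, where m₁(ε) is the Lebesgue measure of the set {x ∈ [−1,1] : x·w(x) < ε}. Then every non-real eigenvalue λ of the Dirichlet problem −y'' + q y = λ w y on [−1,1] satisfies |Re λ| ≤ (4/ε₁)(‖q₋‖₁ + 4‖q₋‖₁²) and |Im λ| ≤ (4/ε₁)‖q₋‖₁. -/
/-!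
Testing the equation against `conj φ` and against `x · conj φ` (integration by parts) gives, for
non-real `λ`, `∫ w |φ|² = 0`, `∫ |φ'|² = -∫ q |φ|²` and
`λ ∫ x w |φ|² = ∫ φ' conj φ + ∫ x |φ'|² + ∫ x q |φ|²`, where `∫ φ' conj φ` is purely imaginary
because `|φ|²` vanishes at both ends. Hence, with `K = ∫ x w |φ|²`,
`|Re λ| K ≤ 2 ∫ q₋ |φ|²` and `|Im λ| K ≤ ‖φ‖₂ ‖φ'‖₂`. The Sobolev-type bounds
`max |φ|² ≤ 2 ‖φ‖₂ ‖φ'‖₂` and `max |φ|² ≤ ‖φ'‖₂² / 2`, with `∫ |φ'|² ≤ ‖q₋‖₁ max |φ|²`, show that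
the set where `x w < ε₁` carries at most a quarter of `ε₁ ‖φ‖₂²` once `8 ‖q₋‖₁² m₁(ε₁) < 1`, so
`K ≥ (3/4) ε₁ ‖φ‖₂²`, and the bounds follow.
-/

open MeasureTheory Set Complex ComplexConjugate

def IsEigenpair (q r : ℝ → ℝ) (lam : ℂ) (φ φ' : ℝ → ℂ) : Prop :=
  (∀ x ∈ Icc (-1:ℝ) 1, HasDerivAt φ (φ' x) x) ∧
  (∀ x ∈ Icc (-1:ℝ) 1,
    φ' x = φ' (-1) + ∫ t in (-1:ℝ)..x, ((q t : ℂ) * φ t - lam * (r t : ℂ) * φ t)) ∧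
  φ (-1) = 0 ∧ φ 1 = 0 ∧ ∃ x ∈ Icc (-1:ℝ) 1, φ x ≠ 0

def IsEigenvalue (q r : ℝ → ℝ) (lam : ℂ) : Prop :=
  ∃ φ φ' : ℝ → ℂ, IsEigenpair q r lam φ φ'

theorem intervalIntegral.integral_primitive_mul_deriv {𝕜 : Type*} [RCLike 𝕜] {a b : ℝ}
    (hab : a ≤ b) {g ψ ψ' : ℝ → 𝕜} (hg : IntervalIntegrable g volume a b)
    (hψ : ∀ x ∈ Icc a b, HasDerivAt ψ (ψ' x) x) (hψ' : ContinuousOn ψ' (Icc a b)) :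
    ∫ x in a..b, (∫ t in a..x, g t) * ψ' x
      = (∫ t in a..b, g t) * ψ b - ∫ t in a..b, g t * ψ t := by
  set μ := volume.restrict (Ioc a b)
  have hψ'μ : Integrable ψ' μ :=
    (hψ'.integrableOn_compact isCompact_Icc).mono_set Ioc_subset_Icc_self
  -- the integrand of both iterated integrals, supported on the triangle `t ≤ x`
  let F : ℝ → ℝ → 𝕜 := fun x t => (Iic x).indicator (fun t => g t * ψ' x) t
  have hF : Integrable (Function.uncurry F) (μ.prod μ) := by
    refine ((hψ'μ.mul_prod hg.1).indicator
      (measurableSet_le measurable_snd measurable_fst)).congr (.of_forall fun z => ?_)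
    simp only [F, Function.uncurry, indicator, mem_Iic, mul_comm]
    rfl
  have inner_t : ∀ x ∈ Ioc a b, ∫ t, F x t ∂μ = (∫ t in a..x, g t) * ψ' x := by
    intro x hx
    rw [MeasureTheory.integral_indicator measurableSet_Iic,
      Measure.restrict_restrict measurableSet_Iic, Iic_inter_Ioc_of_le hx.2,
      MeasureTheory.integral_mul_const, intervalIntegral.integral_of_le hx.1.le]
  have inner_x : ∀ t ∈ Ioc a b, ∫ x, F x t ∂μ = g t * (ψ b - ψ t) := by
    intro t ht
    have hsub : Icc t b ⊆ Icc a b := Icc_subset_Icc_left ht.1.le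
    have hftc : ∫ x in t..b, ψ' x = ψ b - ψ t :=
      intervalIntegral.integral_eq_sub_of_hasDerivAt
        (fun x hx => hψ x (hsub (by rwa [uIcc_of_le ht.2] at hx)))
        ((hψ'.mono hsub).intervalIntegrable_of_Icc ht.2)
    have hF' : ∀ x, F x t = (Ici t).indicator (fun x => g t * ψ' x) x := fun x => by
      simp only [F, indicator, mem_Iic, mem_Ici]
    have hset : Ici t ∩ Ioc a b = Icc t b := by
      ext x
      simp only [mem_inter_iff, mem_Ici, mem_Ioc, mem_Icc]
      exact ⟨fun h => ⟨h.1, h.2.2⟩, fun h => ⟨h.1, ht.1.trans_le h.1, h.2⟩⟩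
    simp only [hF']
    rw [MeasureTheory.integral_indicator measurableSet_Ici,
      Measure.restrict_restrict measurableSet_Ici, hset, MeasureTheory.integral_const_mul, ← hftc,
      intervalIntegral.integral_of_le ht.2,
      integral_Icc_eq_integral_Ioc]
  calc ∫ x in a..b, (∫ t in a..x, g t) * ψ' x
      = ∫ x, ∫ t, F x t ∂μ ∂μ := by
        rw [intervalIntegral.integral_of_le hab]
        exact setIntegral_congr_fun measurableSet_Ioc fun x hx => (inner_t x hx).symm
    _ = ∫ t, ∫ x, F x t ∂μ ∂μ := integral_integral_swap hF
    _ = ∫ t in a..b, (g t * ψ b - g t * ψ t) := by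
        rw [intervalIntegral.integral_of_le hab]
        exact setIntegral_congr_fun measurableSet_Ioc fun t ht => by rw [inner_x t ht, mul_sub]
    _ = (∫ t in a..b, g t) * ψ b - ∫ t in a..b, g t * ψ t := by
        have hψc : ContinuousOn ψ (uIcc a b) := by
          rw [uIcc_of_le hab]; exact fun x hx => (hψ x hx).continuousAt.continuousWithinAt
        rw [intervalIntegral.integral_sub (hg.mul_const _) (hg.mul_continuousOn hψc),
          intervalIntegral.integral_mul_const]

section
variable {F : Type*} [NormedAddCommGroup F] [InnerProductSpace ℝ F] {a b : ℝ} {φ φ' : ℝ → F}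

theorem integral_two_mul_inner_deriv (hab : a ≤ b) (hφ : ∀ x ∈ Icc a b, HasDerivAt φ (φ' x) x)
    (hφ' : ContinuousOn φ' (Icc a b)) :
    ∫ x in a..b, 2 * inner ℝ (φ x) (φ' x) = ‖φ b‖ ^ 2 - ‖φ a‖ ^ 2 := by
  have hφc : ContinuousOn φ (Icc a b) := fun x hx => (hφ x hx).continuousAt.continuousWithinAt
  refine intervalIntegral.integral_eq_sub_of_hasDerivAt
    (fun x hx => (hφ x (by rwa [uIcc_of_le hab] at hx)).norm_sq) ?_
  exact (continuousOn_const.mul (hφc.inner hφ')).intervalIntegrable_of_Icc hab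

theorem sq_norm_le_two_mul_integral_norm_mul_norm_deriv (hab : a ≤ b)
    (hφ : ∀ x ∈ Icc a b, HasDerivAt φ (φ' x) x) (hφ' : ContinuousOn φ' (Icc a b))
    (ha : φ a = 0) {x : ℝ} (hx : x ∈ Icc a b) :
    ‖φ x‖ ^ 2 ≤ 2 * ∫ y in a..b, ‖φ y‖ * ‖φ' y‖ := by
  have hφc : ContinuousOn φ (Icc a b) := fun x hx => (hφ x hx).continuousAt.continuousWithinAt
  have hsub : Icc a x ⊆ Icc a b := Icc_subset_Icc_right hx.2
  have hprod : ContinuousOn (fun y => 2 * (‖φ y‖ * ‖φ' y‖)) (Icc a b) :=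
    continuousOn_const.mul (hφc.norm.mul hφ'.norm)
  calc ‖φ x‖ ^ 2 = ∫ y in a..x, 2 * inner ℝ (φ y) (φ' y) := by
        rw [integral_two_mul_inner_deriv hx.1 (fun y hy => hφ y (hsub hy)) (hφ'.mono hsub), ha,
          norm_zero]
        ring
    _ ≤ ∫ y in a..x, 2 * (‖φ y‖ * ‖φ' y‖) := by
        refine intervalIntegral.integral_mono_on hx.1
          ((continuousOn_const.mul (hφc.inner hφ')).mono hsub |>.intervalIntegrable_of_Icc hx.1)
          ((hprod.mono hsub).intervalIntegrable_of_Icc hx.1) fun y _ => ?_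
        gcongr
        exact real_inner_le_norm _ _
    _ ≤ ∫ y in a..b, 2 * (‖φ y‖ * ‖φ' y‖) :=
        intervalIntegral.integral_mono_interval le_rfl hx.1 hx.2
          (.of_forall fun y => by positivity) (hprod.intervalIntegrable_of_Icc hab)
    _ = 2 * ∫ y in a..b, ‖φ y‖ * ‖φ' y‖ := intervalIntegral.integral_const_mul _ _

end

section
variable {E : Type*} [NormedAddCommGroup E] [NormedSpace ℝ E] [CompleteSpace E] {a b : ℝ}
  {φ φ' : ℝ → E}

theorem two_mul_norm_le_integral_norm_deriv (hφ : ∀ x ∈ Icc a b, HasDerivAt φ (φ' x) x)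
    (hφ' : ContinuousOn φ' (Icc a b)) (ha : φ a = 0) (hb : φ b = 0) {x : ℝ} (hx : x ∈ Icc a b) :
    2 * ‖φ x‖ ≤ ∫ y in a..b, ‖φ' y‖ := by
  have ftc : ∀ c d, a ≤ c → c ≤ d → d ≤ b → ‖φ d - φ c‖ ≤ ∫ y in c..d, ‖φ' y‖ := by
    intro c d hac hcd hdb
    have hsub : Icc c d ⊆ Icc a b := Icc_subset_Icc hac hdb
    rw [← intervalIntegral.integral_eq_sub_of_hasDerivAt
      (fun y hy => hφ y (hsub (by rwa [uIcc_of_le hcd] at hy)))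
      ((hφ'.mono hsub).intervalIntegrable_of_Icc hcd)]
    exact intervalIntegral.norm_integral_le_integral_norm hcd
  have hint : ∀ c d, a ≤ c → c ≤ d → d ≤ b → IntervalIntegrable (‖φ' ·‖) volume c d :=
    fun c d hac hcd hdb => (hφ'.norm.mono (Icc_subset_Icc hac hdb)).intervalIntegrable_of_Icc hcd
  have hab : a ≤ b := hx.1.trans hx.2
  rw [← intervalIntegral.integral_add_adjacent_intervals (b := x)
    (hint a x le_rfl hx.1 hx.2) (hint x b hx.1 hx.2 le_rfl)]
  have h1 := ftc a x le_rfl hx.1 hx.2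
  have h2 := ftc x b hx.1 hx.2 le_rfl
  rw [ha, sub_zero] at h1
  rw [hb, zero_sub, norm_neg] at h2
  linarith
end

theorem intervalIntegral.integral_norm_mul_norm_le {E F : Type*} [NormedAddCommGroup E]
    [NormedAddCommGroup F] {a b : ℝ} (hab : a ≤ b) {f : ℝ → E} {g : ℝ → F}
    (hf : ContinuousOn f (Icc a b)) (hg : ContinuousOn g (Icc a b)) :
    ∫ x in a..b, ‖f x‖ * ‖g x‖
      ≤ √(∫ x in a..b, ‖f x‖ ^ 2) * √(∫ x in a..b, ‖g x‖ ^ 2) := by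
  have memLp : ∀ h : ℝ → ℝ, ContinuousOn h (Icc a b) →
      MemLp h (ENNReal.ofReal 2) (volume.restrict (Ioc a b)) := by
    intro h hh
    obtain ⟨C, hC⟩ := isCompact_Icc.exists_bound_of_continuousOn hh
    exact .of_bound ((hh.mono Ioc_subset_Icc_self).aestronglyMeasurable measurableSet_Ioc) C
      (ae_restrict_of_forall_mem measurableSet_Ioc fun x hx => hC x (Ioc_subset_Icc_self hx))
  have := integral_mul_norm_le_Lp_mul_Lq (p := 2) (q := 2) ⟨by norm_num, by norm_num, by norm_num⟩
    (memLp _ hf.norm) (memLp _ hg.norm)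
  simp only [intervalIntegral.integral_of_le hab, Real.sqrt_eq_rpow]
  simpa only [Real.rpow_two, norm_norm] using this

theorem intervalIntegral.integral_norm_le {E : Type*} [NormedAddCommGroup E] {a b : ℝ}
    (hab : a ≤ b) {f : ℝ → E} (hf : ContinuousOn f (Icc a b)) :
    ∫ x in a..b, ‖f x‖ ≤ √(∫ x in a..b, ‖f x‖ ^ 2) * √(b - a) := by
  simpa using intervalIntegral.integral_norm_mul_norm_le hab hf (continuousOn_const (c := (1:ℝ)))

theorem intervalIntegral.abs_integral_id_mul_le {f : ℝ → ℝ}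
    (hf : IntervalIntegrable f volume (-1) 1) :
    |∫ x in (-1:ℝ)..1, x * f x| ≤ ∫ x in (-1:ℝ)..1, |f x| := by
  refine (intervalIntegral.abs_integral_le_integral_abs (by norm_num)).trans
    (intervalIntegral.integral_mono_on (by norm_num) ?_ hf.abs fun x hx => ?_)
  · exact (hf.continuousOn_mul continuousOn_id).abs
  · rw [abs_mul]
    exact mul_le_of_le_one_left (abs_nonneg _) (abs_le.2 hx)

theorem mul_setIntegral_le_setIntegral_mul_add {α : Type*} [MeasurableSpace α] {μ : Measure α}
    {s : Set α} (hs : MeasurableSet s) (hμs : μ s ≠ ⊤) {u v : α → ℝ} {B ε : ℝ} (hε : 0 ≤ ε)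
    (hu : IntegrableOn u s μ) (hvu : IntegrableOn (fun x => v x * u x) s μ)
    (hu0 : ∀ x ∈ s, 0 ≤ u x) (huB : ∀ x ∈ s, u x ≤ B) (hv : ∀ᵐ x ∂μ.restrict s, 0 ≤ v x) :
    ε * ∫ x in s, u x ∂μ
      ≤ ∫ x in s, v x * u x ∂μ + ε * B * (μ {x ∈ s | v x < ε}).toReal := by
  have : IsFiniteMeasure (μ.restrict s) := isFiniteMeasure_restrict.2 hμs
  set S := {x ∈ s | v x < ε}
  -- `S` need not be measurable, since `v` is not assumed to be
  set T := toMeasurable μ S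
  have hT : MeasurableSet T := measurableSet_toMeasurable μ S
  have hTs : μ (T ∩ s) = μ S := le_antisymm
    ((measure_mono inter_subset_left).trans (measure_toMeasurable S).le)
    (measure_mono (subset_inter (subset_toMeasurable μ S) fun x hx => hx.1))
  have hpt : ∀ᵐ x ∂μ.restrict s, ε * u x ≤ v x * u x + T.indicator (fun _ => ε * B) x := by
    filter_upwards [hv, ae_restrict_mem hs] with x hvx hxs
    by_cases hxT : x ∈ T
    · rw [indicator_of_mem hxT]
      linarith [mul_le_mul_of_nonneg_left (huB x hxs) hε, mul_nonneg hvx (hu0 x hxs)]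
    · have : ε ≤ v x := not_lt.1 fun h => hxT (subset_toMeasurable μ S ⟨hxs, h⟩)
      rw [indicator_of_notMem hxT, add_zero]
      exact mul_le_mul_of_nonneg_right this (hu0 x hxs)
  calc ε * ∫ x in s, u x ∂μ = ∫ x in s, ε * u x ∂μ := (integral_const_mul _ _).symm
    _ ≤ ∫ x in s, (v x * u x + T.indicator (fun _ => ε * B) x) ∂μ :=
        integral_mono_ae (hu.const_mul ε) (hvu.add ((integrable_const _).indicator hT)) hpt
    _ = _ := by
        rw [integral_add hvu ((integrable_const _).indicator hT), integral_indicator_const _ hT,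
          measureReal_restrict_apply hT, measureReal_def, hTs, smul_eq_mul, mul_comm]

theorem IntervalIntegrable.ofReal {f : ℝ → ℝ} {a b : ℝ} {μ : Measure ℝ}
    (hf : IntervalIntegrable f μ a b) : IntervalIntegrable (fun x => (f x : ℂ)) μ a b :=
  ⟨hf.1.ofReal, hf.2.ofReal⟩

theorem intervalIntegral.integral_mul_le_integral_mul_of_le {a b C : ℝ} {f g : ℝ → ℝ}
    (hab : a ≤ b) (hf : IntervalIntegrable f volume a b)
    (hfg : IntervalIntegrable (fun x => f x * g x) volume a b)
    (hf0 : ∀ x ∈ Icc a b, 0 ≤ f x) (hg : ∀ x ∈ Icc a b, g x ≤ C) :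
    ∫ x in a..b, f x * g x ≤ (∫ x in a..b, f x) * C := by
  rw [← intervalIntegral.integral_mul_const]
  exact intervalIntegral.integral_mono_on hab hfg (hf.mul_const C)
    fun x hx => mul_le_mul_of_nonneg_left (hg x hx) (hf0 x hx)

theorem mul_integral_sq_norm_le {E : Type*} [NormedAddCommGroup E] {w : ℝ → ℝ} {φ : ℝ → E}
    {ε M : ℝ} (hε : 0 ≤ ε) (hw : IntegrableOn w (Icc (-1) 1))
    (hxw : ∀ᵐ x ∂volume.restrict (Icc (-1:ℝ) 1), 0 < x * w x)
    (hφ : ContinuousOn φ (Icc (-1) 1)) (hM : ∀ x ∈ Icc (-1:ℝ) 1, ‖φ x‖ ≤ M) :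
    ε * ∫ x in (-1:ℝ)..1, ‖φ x‖ ^ 2
      ≤ (∫ x in (-1:ℝ)..1, x * w x * ‖φ x‖ ^ 2)
        + ε * M ^ 2 * (volume {x ∈ Icc (-1:ℝ) 1 | x * w x < ε}).toReal := by
  have hφ2 : ContinuousOn (fun x => ‖φ x‖ ^ 2) (Icc (-1) 1) := hφ.norm.pow 2
  simp only [intervalIntegral.integral_of_le (show (-1:ℝ) ≤ 1 by norm_num),
    ← integral_Icc_eq_integral_Ioc]
  exact mul_setIntegral_le_setIntegral_mul_add measurableSet_Icc measure_Icc_lt_top.ne hε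
    (hφ2.integrableOn_compact isCompact_Icc)
    ((IntegrableOn.continuousOn_mul continuousOn_id hw isCompact_Icc).mul_continuousOn hφ2
      isCompact_Icc)
    (fun x _ => sq_nonneg _) (fun x hx => pow_le_pow_left₀ (norm_nonneg _) (hM x hx) 2)
    (hxw.mono fun x hx => hx.le)

theorem IntervalIntegrable.neg_part {f : ℝ → ℝ} {a b : ℝ} {μ : Measure ℝ}
    (hf : IntervalIntegrable f μ a b) : IntervalIntegrable (fun x => max (-f x) 0) μ a b :=
  ⟨hf.1.neg_part, hf.2.neg_part⟩

namespace IsEigenpair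

variable {q w : ℝ → ℝ} {lam : ℂ} {φ φ' : ℝ → ℂ}

theorem continuousOn (h : IsEigenpair q w lam φ φ') : ContinuousOn φ (Icc (-1) 1) :=
  fun x hx => (h.1 x hx).continuousAt.continuousWithinAt

theorem intervalIntegrable_mul_sq_norm (h : IsEigenpair q w lam φ φ') {f : ℝ → ℝ}
    (hf : IntervalIntegrable f volume (-1) 1) :
    IntervalIntegrable (fun x => f x * ‖φ x‖ ^ 2) volume (-1) 1 :=
  hf.mul_continuousOn (by rw [uIcc_of_le (by norm_num)]; exact h.continuousOn.norm.pow 2)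

theorem intervalIntegrable_rhs (h : IsEigenpair q w lam φ φ')
    (hq : IntervalIntegrable q volume (-1) 1) (hw : IntervalIntegrable w volume (-1) 1) :
    IntervalIntegrable (fun t => (q t : ℂ) * φ t - lam * (w t : ℂ) * φ t) volume (-1) 1 := by
  have hφ : ContinuousOn φ (uIcc (-1) 1) := by
    rw [uIcc_of_le (by norm_num)]; exact h.continuousOn
  exact (hq.ofReal.mul_continuousOn hφ).sub
    ((hw.ofReal.const_mul lam).mul_continuousOn hφ)

theorem continuousOn_deriv (h : IsEigenpair q w lam φ φ')
    (hq : IntervalIntegrable q volume (-1) 1) (hw : IntervalIntegrable w volume (-1) 1) :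
    ContinuousOn φ' (Icc (-1) 1) := by
  have hprim := intervalIntegral.continuousOn_primitive_interval'
    (h.intervalIntegrable_rhs hq hw) left_mem_uIcc
  rw [uIcc_of_le (by norm_num)] at hprim
  exact (continuousOn_const.add hprim).congr h.2.1

theorem integral_deriv_mul_deriv (h : IsEigenpair q w lam φ φ')
    (hq : IntervalIntegrable q volume (-1) 1) (hw : IntervalIntegrable w volume (-1) 1)
    {ψ ψ' : ℝ → ℂ} (hψ : ∀ x ∈ Icc (-1:ℝ) 1, HasDerivAt ψ (ψ' x) x)
    (hψ' : ContinuousOn ψ' (Icc (-1) 1)) (hψa : ψ (-1) = 0) (hψb : ψ 1 = 0) :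
    ∫ x in (-1:ℝ)..1, φ' x * ψ' x
      = -∫ x in (-1:ℝ)..1, ((q x : ℂ) * φ x - lam * w x * φ x) * ψ x := by
  set g := fun t => (q t : ℂ) * φ t - lam * (w t : ℂ) * φ t
  have hg := h.intervalIntegrable_rhs hq hw
  have hG : ContinuousOn (fun x => ∫ t in (-1:ℝ)..x, g t) (Icc (-1) 1) := by
    simpa only [uIcc_of_le (by norm_num : (-1:ℝ) ≤ 1)] using
      intervalIntegral.continuousOn_primitive_interval' hg left_mem_uIcc
  have hftc : ∫ x in (-1:ℝ)..1, ψ' x = ψ 1 - ψ (-1) :=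
    intervalIntegral.integral_eq_sub_of_hasDerivAt
      (fun x hx => hψ x (by rwa [uIcc_of_le (by norm_num)] at hx))
      (hψ'.intervalIntegrable_of_Icc (by norm_num))
  calc ∫ x in (-1:ℝ)..1, φ' x * ψ' x
      = ∫ x in (-1:ℝ)..1, (φ' (-1) * ψ' x + (∫ t in (-1:ℝ)..x, g t) * ψ' x) := by
        refine intervalIntegral.integral_congr fun x hx => ?_
        rw [uIcc_of_le (by norm_num)] at hx
        simp only [h.2.1 x hx, add_mul, g]
    _ = φ' (-1) * (ψ 1 - ψ (-1))
          + ((∫ t in (-1:ℝ)..1, g t) * ψ 1 - ∫ t in (-1:ℝ)..1, g t * ψ t) := by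
        rw [intervalIntegral.integral_add
          ((hψ'.intervalIntegrable_of_Icc (by norm_num)).const_mul _)
          (((hG.mul hψ').intervalIntegrable_of_Icc (by norm_num) :
            IntervalIntegrable (fun x => (∫ t in (-1:ℝ)..x, g t) * ψ' x) volume (-1) 1)),
          intervalIntegral.integral_const_mul, hftc,
          intervalIntegral.integral_primitive_mul_deriv (by norm_num) hg hψ hψ']
    _ = _ := by rw [hψa, hψb]; ring

theorem multiplier_identity (h : IsEigenpair q w lam φ φ')
    (hq : IntervalIntegrable q volume (-1) 1) (hw : IntervalIntegrable w volume (-1) 1)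
    {χ χ' : ℝ → ℝ} (hχ : ∀ x ∈ Icc (-1:ℝ) 1, HasDerivAt χ (χ' x) x)
    (hχ' : ContinuousOn χ' (Icc (-1) 1)) :
    (∫ x in (-1:ℝ)..1, (χ' x : ℂ) * (φ' x * conj (φ x)))
        + ((∫ x in (-1:ℝ)..1, χ x * ‖φ' x‖ ^ 2 : ℝ) : ℂ)
      = lam * ((∫ x in (-1:ℝ)..1, χ x * w x * ‖φ x‖ ^ 2 : ℝ) : ℂ)
        - ((∫ x in (-1:ℝ)..1, χ x * q x * ‖φ x‖ ^ 2 : ℝ) : ℂ) := by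
  have hφ := h.continuousOn
  have hφ' := h.continuousOn_deriv hq hw
  have hχc : ContinuousOn χ (Icc (-1) 1) := fun x hx => (hχ x hx).continuousAt.continuousWithinAt
  have weak := h.integral_deriv_mul_deriv hq hw (ψ := fun x => (χ x : ℂ) * conj (φ x))
    (ψ' := fun x => (χ' x : ℂ) * conj (φ x) + χ x * conj (φ' x))
    (fun x hx => (hχ x hx).ofReal_comp.mul (h.1 x hx).star)
    ((continuous_ofReal.comp_continuousOn hχ').mul (continuous_conj.comp_continuousOn hφ) |>.add
      ((continuous_ofReal.comp_continuousOn hχc).mul (continuous_conj.comp_continuousOn hφ')))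
    (by simp [h.2.2.1]) (by simp [h.2.2.2.1])
  have lhs : ∀ x, φ' x * ((χ' x : ℂ) * conj (φ x) + χ x * conj (φ' x))
      = (χ' x : ℂ) * (φ' x * conj (φ x)) + ((χ x * ‖φ' x‖ ^ 2 : ℝ) : ℂ) := fun x => by
    push_cast; rw [← mul_conj']; ring
  have rhs : ∀ x, ((q x : ℂ) * φ x - lam * w x * φ x) * ((χ x : ℂ) * conj (φ x))
      = ((χ x * q x * ‖φ x‖ ^ 2 : ℝ) : ℂ) - lam * ((χ x * w x * ‖φ x‖ ^ 2 : ℝ) : ℂ) := fun x => by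
    push_cast; rw [← mul_conj']; ring
  have hcross : IntervalIntegrable (fun x => (χ' x : ℂ) * (φ' x * conj (φ x))) volume (-1) 1 :=
    ((continuous_ofReal.comp_continuousOn hχ').mul
      (hφ'.mul (continuous_conj.comp_continuousOn hφ))).intervalIntegrable_of_Icc (by norm_num)
  have hkin : IntervalIntegrable (fun x => χ x * ‖φ' x‖ ^ 2) volume (-1) 1 :=
    (hχc.mul (hφ'.norm.pow 2)).intervalIntegrable_of_Icc (by norm_num)
  have hpot : ∀ f : ℝ → ℝ, IntervalIntegrable f volume (-1) 1 →
      IntervalIntegrable (fun x => χ x * f x * ‖φ x‖ ^ 2) volume (-1) 1 := fun f hf =>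
    h.intervalIntegrable_mul_sq_norm
      (hf.continuousOn_mul (by rw [uIcc_of_le (by norm_num)]; exact hχc))
  simp only [lhs, rhs] at weak
  rw [intervalIntegral.integral_add hcross (hkin.ofReal), intervalIntegral.integral_sub
    ((hpot q hq).ofReal) (((hpot w hw).ofReal).const_mul lam), intervalIntegral.integral_const_mul,
    intervalIntegral.integral_ofReal, intervalIntegral.integral_ofReal,
    intervalIntegral.integral_ofReal] at weak
  rw [weak]
  ring

theorem integral_sq_norm_deriv_eq (h : IsEigenpair q w lam φ φ')
    (hq : IntervalIntegrable q volume (-1) 1) (hw : IntervalIntegrable w volume (-1) 1)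
    (him : lam.im ≠ 0) :
    ∫ x in (-1:ℝ)..1, ‖φ' x‖ ^ 2 = -∫ x in (-1:ℝ)..1, q x * ‖φ x‖ ^ 2 := by
  have e := h.multiplier_identity hq hw (χ := fun _ => 1) (χ' := fun _ => 0)
    (fun x _ => hasDerivAt_const x 1) continuousOn_const
  simp only [ofReal_zero, zero_mul, intervalIntegral.integral_zero, zero_add, one_mul] at e
  have hW : ∫ x in (-1:ℝ)..1, w x * ‖φ x‖ ^ 2 = 0 := by
    have := congrArg im e
    simp only [ofReal_im, sub_im, mul_im, ofReal_re, mul_zero, zero_add, sub_zero] at this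
    exact (mul_eq_zero.1 this.symm).resolve_left him
  have := congrArg re e
  simp only [ofReal_re, sub_re, mul_re, ofReal_im, mul_zero, sub_zero, hW] at this
  linarith

theorem re_integral_deriv_mul_conj (h : IsEigenpair q w lam φ φ')
    (hq : IntervalIntegrable q volume (-1) 1) (hw : IntervalIntegrable w volume (-1) 1) :
    (∫ x in (-1:ℝ)..1, φ' x * conj (φ x)).re = 0 := by
  have hφ' := h.continuousOn_deriv hq hw
  have hi : IntervalIntegrable (fun x => φ' x * conj (φ x)) volume (-1) 1 :=
    (hφ'.mul (continuous_conj.comp_continuousOn h.continuousOn)).intervalIntegrable_of_Icc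
      (by norm_num)
  rw [← reCLM_apply, ← ContinuousLinearMap.intervalIntegral_comp_comm _ hi]
  have := integral_two_mul_inner_deriv (by norm_num) h.1 hφ'
  simp only [h.2.2.1, h.2.2.2.1, norm_zero, sub_self, intervalIntegral.integral_const_mul,
    Complex.inner] at this
  simpa using this

theorem re_mul_integral_eq (h : IsEigenpair q w lam φ φ')
    (hq : IntervalIntegrable q volume (-1) 1) (hw : IntervalIntegrable w volume (-1) 1) :
    lam.re * ∫ x in (-1:ℝ)..1, x * w x * ‖φ x‖ ^ 2
      = (∫ x in (-1:ℝ)..1, x * ‖φ' x‖ ^ 2) + ∫ x in (-1:ℝ)..1, x * q x * ‖φ x‖ ^ 2 := by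
  have e := congrArg re (h.multiplier_identity hq hw (χ := id) (χ' := fun _ => 1)
    (fun x _ => hasDerivAt_id x) continuousOn_const)
  simp only [ofReal_one, one_mul, add_re, h.re_integral_deriv_mul_conj hq hw, ofReal_re, sub_re,
    mul_re, ofReal_im, mul_zero, sub_zero, id, zero_add] at e
  linarith

theorem abs_im_mul_integral_le (h : IsEigenpair q w lam φ φ')
    (hq : IntervalIntegrable q volume (-1) 1) (hw : IntervalIntegrable w volume (-1) 1) :
    |lam.im * ∫ x in (-1:ℝ)..1, x * w x * ‖φ x‖ ^ 2| ≤ ∫ x in (-1:ℝ)..1, ‖φ x‖ * ‖φ' x‖ := by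
  have e := congrArg im (h.multiplier_identity hq hw (χ := id) (χ' := fun _ => 1)
    (fun x _ => hasDerivAt_id x) continuousOn_const)
  simp only [ofReal_one, one_mul, add_im, ofReal_im, add_zero, sub_im, mul_im, ofReal_re,
    mul_zero, sub_zero, id, zero_add] at e
  rw [← e]
  refine (abs_im_le_norm _).trans ((intervalIntegral.norm_integral_le_integral_norm
    (by norm_num)).trans_eq (intervalIntegral.integral_congr fun x _ => ?_))
  simp [mul_comm]

theorem integral_sq_norm_deriv_le (h : IsEigenpair q w lam φ φ')
    (hq : IntervalIntegrable q volume (-1) 1) (hw : IntervalIntegrable w volume (-1) 1)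
    (him : lam.im ≠ 0) :
    ∫ x in (-1:ℝ)..1, ‖φ' x‖ ^ 2 ≤ ∫ x in (-1:ℝ)..1, max (-q x) 0 * ‖φ x‖ ^ 2 := by
  rw [h.integral_sq_norm_deriv_eq hq hw him, ← intervalIntegral.integral_neg]
  refine intervalIntegral.integral_mono_on (by norm_num) (h.intervalIntegrable_mul_sq_norm hq).neg
    (h.intervalIntegrable_mul_sq_norm hq.neg_part) fun x _ => ?_
  rw [← neg_mul]
  exact mul_le_mul_of_nonneg_right (le_max_left _ _) (sq_nonneg _)

theorem abs_re_mul_integral_le (h : IsEigenpair q w lam φ φ')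
    (hq : IntervalIntegrable q volume (-1) 1) (hw : IntervalIntegrable w volume (-1) 1)
    (him : lam.im ≠ 0) :
    |lam.re| * ∫ x in (-1:ℝ)..1, x * w x * ‖φ x‖ ^ 2
      ≤ 2 * ∫ x in (-1:ℝ)..1, max (-q x) 0 * ‖φ x‖ ^ 2 := by
  have hφ'2 : IntervalIntegrable (fun x => ‖φ' x‖ ^ 2) volume (-1) 1 :=
    ((h.continuousOn_deriv hq hw).norm.pow 2).intervalIntegrable_of_Icc (by norm_num)
  have hkin := intervalIntegral.abs_integral_id_mul_le hφ'2
  have hpot := intervalIntegral.abs_integral_id_mul_le (h.intervalIntegrable_mul_sq_norm hq)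
  simp only [← mul_assoc, abs_pow, abs_norm, abs_mul] at hkin hpot
  calc |lam.re| * ∫ x in (-1:ℝ)..1, x * w x * ‖φ x‖ ^ 2
      ≤ |lam.re * ∫ x in (-1:ℝ)..1, x * w x * ‖φ x‖ ^ 2| := by
        rw [abs_mul]; exact mul_le_mul_of_nonneg_left (le_abs_self _) (abs_nonneg _)
    _ ≤ (∫ x in (-1:ℝ)..1, ‖φ' x‖ ^ 2) + ∫ x in (-1:ℝ)..1, |q x| * ‖φ x‖ ^ 2 := by
        rw [h.re_mul_integral_eq hq hw]; exact (abs_add_le _ _).trans (add_le_add hkin hpot)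
    _ = ∫ x in (-1:ℝ)..1, (|q x| * ‖φ x‖ ^ 2 - q x * ‖φ x‖ ^ 2) := by
        rw [h.integral_sq_norm_deriv_eq hq hw him, intervalIntegral.integral_sub
          (h.intervalIntegrable_mul_sq_norm hq.abs) (h.intervalIntegrable_mul_sq_norm hq)]
        ring
    _ = 2 * ∫ x in (-1:ℝ)..1, max (-q x) 0 * ‖φ x‖ ^ 2 := by
        rw [← intervalIntegral.integral_const_mul]
        refine intervalIntegral.integral_congr fun x _ => ?_
        rcases le_total (q x) 0 with hx | hx
        · rw [abs_of_nonpos hx, max_eq_left (neg_nonneg.2 hx)]; ring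
        · rw [abs_of_nonneg hx, max_eq_right (neg_nonpos.2 hx)]; ring

end IsEigenpair

theorem abs_le_of_energy_estimates {ε Q m M N D K A r i : ℝ} (hε : 0 < ε) (hm : 0 ≤ m)
    (hM : 0 < M) (hN : 0 ≤ N) (hD : 0 ≤ D) (hMND : M ^ 2 ≤ 2 * (√N * √D)) (hDA : D ≤ A)
    (hAQ : A ≤ Q * M ^ 2) (hMD : 2 * M ≤ √D * √2) (hK : ε * N ≤ K + ε * M ^ 2 * m)
    (hr : |r| * K ≤ 2 * A) (hi : |i * K| ≤ √N * √D) (hQm : 8 * Q ^ 2 * m < 1) :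
    |r| ≤ 4 / ε * (Q + 4 * Q ^ 2) ∧ |i| ≤ 4 / ε * Q := by
  obtain ⟨n, hn, rfl⟩ : ∃ n, 0 ≤ n ∧ N = n ^ 2 := ⟨√N, Real.sqrt_nonneg _, (Real.sq_sqrt hN).symm⟩
  obtain ⟨d, hd, rfl⟩ : ∃ d, 0 ≤ d ∧ D = d ^ 2 := ⟨√D, Real.sqrt_nonneg _, (Real.sq_sqrt hD).symm⟩
  rw [Real.sqrt_sq hn, Real.sqrt_sq hd] at hMND hi
  rw [Real.sqrt_sq hd] at hMD
  have hMd : 2 * M ^ 2 ≤ d ^ 2 := by nlinarith [Real.sq_sqrt (show (0:ℝ) ≤ 2 by norm_num)]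
  have hd0 : 0 < d := by nlinarith
  -- `2 M² ≤ D ≤ A ≤ Q M²`
  have hQ : 2 ≤ Q := le_of_mul_le_mul_right (by linarith) (pow_pos hM 2)
  have hdn : d ≤ 2 * Q * n := by nlinarith
  have hMn : M ^ 2 ≤ 4 * Q * n ^ 2 := by nlinarith
  have hQm' : 16 * Q * m ≤ 1 := by
    have : 0 ≤ m * Q * (Q - 2) := mul_nonneg (mul_nonneg hm (by linarith)) (by linarith)
    nlinarith
  have hmM : m * M ^ 2 ≤ n ^ 2 / 4 := by
    nlinarith [mul_le_mul_of_nonneg_left hMn hm, mul_le_mul_of_nonneg_right hQm' (sq_nonneg n)]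
  have hK' : 3 / 4 * ε * n ^ 2 ≤ K := by nlinarith
  have hn0 : 0 < n := by nlinarith
  have hK0 : 0 < K := lt_of_lt_of_le (by positivity) hK'
  rw [abs_mul, abs_of_pos hK0] at hi
  rw [div_mul_eq_mul_div, div_mul_eq_mul_div, le_div_iff₀ hε, le_div_iff₀ hε]
  constructor
  · nlinarith [abs_nonneg r]
  · nlinarith [abs_nonneg i]

theorem apriori_bounds_one_turning_point_general
    (q w : ℝ → ℝ)
    (hq : IntegrableOn q (Icc (-1:ℝ) 1))
    (hw : IntegrableOn w (Icc (-1:ℝ) 1))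
    (hxw : ∀ᵐ x ∂(volume.restrict (Icc (-1:ℝ) 1)), 0 < x * w x)
    (ε₁ : ℝ) (hε₁ : 0 < ε₁)
    (hm : 8 * (∫ x in (-1:ℝ)..1, max (-(q x)) 0) ^ 2 *
        (volume {x ∈ Icc (-1:ℝ) 1 | x * w x < ε₁}).toReal < 1)
    (lam : ℂ) (him : lam.im ≠ 0) (heig : IsEigenvalue q w lam) :
    |lam.re| ≤ 4 / ε₁ * ((∫ x in (-1:ℝ)..1, max (-(q x)) 0) +
        4 * (∫ x in (-1:ℝ)..1, max (-(q x)) 0) ^ 2) ∧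
    |lam.im| ≤ 4 / ε₁ * (∫ x in (-1:ℝ)..1, max (-(q x)) 0) := by
  obtain ⟨φ, φ', h⟩ := heig
  have hI : (-1:ℝ) ≤ 1 := by norm_num
  have hq' := (intervalIntegrable_iff_integrableOn_Icc_of_le hI).2 hq
  have hw' := (intervalIntegrable_iff_integrableOn_Icc_of_le hI).2 hw
  have hφ' := h.continuousOn_deriv hq' hw'
  obtain ⟨x₀, hx₀, hmax⟩ :=
    isCompact_Icc.exists_isMaxOn (nonempty_Icc.2 hI) h.continuousOn.norm
  obtain ⟨x₁, hx₁, hφx₁⟩ := h.2.2.2.2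
  have hCS := intervalIntegral.integral_norm_mul_norm_le hI h.continuousOn hφ'
  refine abs_le_of_energy_estimates hε₁ ENNReal.toReal_nonneg
    ((norm_pos_iff.2 hφx₁).trans_le (hmax hx₁))
    (intervalIntegral.integral_nonneg hI fun x _ => sq_nonneg _)
    (intervalIntegral.integral_nonneg hI fun x _ => sq_nonneg _)
    ((sq_norm_le_two_mul_integral_norm_mul_norm_deriv hI h.1 hφ' h.2.2.1 hx₀).trans
      (by gcongr))
    (h.integral_sq_norm_deriv_le hq' hw' him)
    (intervalIntegral.integral_mul_le_integral_mul_of_le hI hq'.neg_part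
      (h.intervalIntegrable_mul_sq_norm hq'.neg_part) (fun x _ => le_max_right _ _)
      fun x hx => pow_le_pow_left₀ (norm_nonneg _) (hmax hx) 2)
    ((two_mul_norm_le_integral_norm_deriv h.1 hφ' h.2.2.1 h.2.2.2.1 hx₀).trans
      ((intervalIntegral.integral_norm_le hI hφ').trans_eq (by norm_num)))
    (mul_integral_sq_norm_le hε₁.le hw hxw h.continuousOn hmax)
    (h.abs_re_mul_integral_le hq' hw' him)
    ((h.abs_im_mul_integral_le hq' hw').trans hCS) hm

/-- a priori bounds on non-real eigenvalues when `x·w(x) > 0` a.e. -/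
theorem apriori_bounds_one_turning_point
    (q w : ℝ → ℝ)
    (hq : IntegrableOn q (Icc (-1:ℝ) 1))
    (hw : IntegrableOn w (Icc (-1:ℝ) 1))
    (hw0 : ∀ᵐ x ∂(volume.restrict (Icc (-1:ℝ) 1)), w x ≠ 0)
    (hsign : 0 < volume {x ∈ Icc (-1:ℝ) 1 | 0 < w x} ∧
             0 < volume {x ∈ Icc (-1:ℝ) 1 | w x < 0})
    (hxw : ∀ᵐ x ∂(volume.restrict (Icc (-1:ℝ) 1)), 0 < x * w x)
    (ε₁ : ℝ) (hε₁ : 0 < ε₁)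
    (hm : 8 * (∫ x in (-1:ℝ)..1, max (-(q x)) 0) ^ 2 *
        (volume {x ∈ Icc (-1:ℝ) 1 | x * w x < ε₁}).toReal < 1)
    (lam : ℂ) (him : lam.im ≠ 0) (heig : IsEigenvalue q w lam) :
    |lam.re| ≤ 4 / ε₁ * ((∫ x in (-1:ℝ)..1, max (-(q x)) 0) +
        4 * (∫ x in (-1:ℝ)..1, max (-(q x)) 0) ^ 2) ∧
    |lam.im| ≤ 4 / ε₁ * (∫ x in (-1:ℝ)..1, max (-(q x)) 0) :=
  apriori_bounds_one_turning_point_general q w hq hw hxw ε₁ hε₁ hm lam him heig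
end

section
/- Suppose q(−x) = q(x) and w(−x) = −w(x) for x ∈ [−1,1]. If λ = iα with α ∈ ℝ, α ≠ 0, is an eigenvalue of the Dirichlet problem −y'' + q y = λ w y on [−1,1] with eigenfunction φ, then there exists a complex constant C with |C| = 1 such that conj(φ(−x)) = C·φ(x) for all x ∈ [−1,1]. -/
/-!
The function `ψ x = conj (φ (-x))` solves the same equation as `φ`, because
`conj (q (-x) - iα w (-x)) = q x - iα w x`, and it satisfies the same Dirichlet conditions.
Solutions of `y'' = (q - iα w) y` vanishing at `-1` are determined by `y'(-1)` (uniqueness for the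
initial value problem, from a contraction estimate on intervals of length `< 1 / ∫ |q - iα w|`),
so `ψ = C φ` with `C = ψ'(-1) / φ'(-1)`, and `φ'(-1) ≠ 0` since `φ ≢ 0`.
Applying `ψ = C φ` twice gives `|C|² = 1`.
-/

open MeasureTheory Set Complex

noncomputable section

/-- `y`, with derivative `y'`, solves `y'' = H y` on `s` in the integrated (Carathéodory) sense. -/
def IsWeakSolution (H : ℝ → ℂ) (s : Set ℝ) (y y' : ℝ → ℂ) : Prop :=
  (∀ x ∈ s, HasDerivAt y (y' x) x) ∧ ∀ x ∈ s, ∀ z ∈ s, y' z - y' x = ∫ t in x..z, H t * y t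

theorem intervalIntegrable_mul_of_continuousOn {H y : ℝ → ℂ} {a b x z : ℝ}
    (hH : IntegrableOn H (Icc a b)) (hy : ContinuousOn y (Icc a b)) (hx : x ∈ Icc a b)
    (hz : z ∈ Icc a b) : IntervalIntegrable (fun t => H t * y t) volume x z :=
  ((hH.mul_continuousOn hy isCompact_Icc).mono_set (uIcc_subset_Icc hx hz)).intervalIntegrable

namespace IsWeakSolution

variable {H : ℝ → ℂ} {s : Set ℝ} {y y' z z' : ℝ → ℂ} {a b c d : ℝ}

theorem continuousOn (h : IsWeakSolution H s y y') : ContinuousOn y s :=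
  fun x hx => (h.1 x hx).continuousAt.continuousWithinAt

theorem mono {t : Set ℝ} (h : IsWeakSolution H s y y') (hts : t ⊆ s) :
    IsWeakSolution H t y y' :=
  ⟨fun x hx => h.1 x (hts hx), fun x hx z hz => h.2 x (hts hx) z (hts hz)⟩

theorem eqOn_zero_of_mul_integral_lt_one (hcd : c ≤ d) (hH : IntegrableOn H (Icc c d))
    (h : IsWeakSolution H (Icc c d) y y') (hyc : y c = 0) (hy'c : y' c = 0)
    (hsmall : (d - c) * ∫ t in c..d, ‖H t‖ < 1) : EqOn y 0 (Icc c d) := by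
  obtain ⟨m, hm, hmax⟩ := isCompact_Icc.exists_isMaxOn (nonempty_Icc.2 hcd) h.continuousOn.norm
  set M := ‖y m‖
  set T := ∫ t in c..d, ‖H t‖
  have hT : 0 ≤ T := intervalIntegral.integral_nonneg hcd fun t _ => norm_nonneg _
  have hHM : IntegrableOn (fun t => ‖H t‖ * M) (Icc c d) := hH.norm.mul_const M
  have hy' : ∀ x ∈ Icc c d, ‖y' x‖ ≤ T * M := by
    intro x hx
    have hcx : c ∈ Icc c d := left_mem_Icc.2 hcd
    calc ‖y' x‖ = ‖∫ t in c..x, H t * y t‖ := by rw [← h.2 c hcx x hx, hy'c, sub_zero]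
      _ ≤ ∫ t in c..x, ‖H t‖ * M := by
        refine intervalIntegral.norm_integral_le_of_norm_le hx.1
          (Filter.Eventually.of_forall fun t ht => ?_)
          ((intervalIntegrable_iff_integrableOn_Icc_of_le hx.1).2
            (hHM.mono_set (Icc_subset_Icc_right hx.2)))
        rw [norm_mul]
        exact mul_le_mul_of_nonneg_left (hmax ⟨ht.1.le, ht.2.trans hx.2⟩) (norm_nonneg _)
      _ ≤ ∫ t in c..d, ‖H t‖ * M :=
        intervalIntegral.integral_mono_interval le_rfl hx.1 hx.2
          (Filter.Eventually.of_forall fun t => by positivity)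
          ((intervalIntegrable_iff_integrableOn_Icc_of_le hcd).2 hHM)
      _ = T * M := intervalIntegral.integral_mul_const M _
  have hy : ∀ x ∈ Icc c d, ‖y x‖ ≤ T * M * (d - c) := by
    intro x hx
    have := norm_image_sub_le_of_norm_deriv_le_segment'
      (fun x hx => (h.1 x hx).hasDerivWithinAt) (fun x hx => hy' x (Ico_subset_Icc_self hx)) x hx
    rw [hyc, sub_zero] at this
    exact this.trans (mul_le_mul_of_nonneg_left (by linarith [hx.2]) (by positivity))
  have hM : M = 0 := by
    have := hy m hm
    nlinarith [norm_nonneg (y m)]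
  intro x hx
  exact norm_le_zero_iff.1 (hM ▸ hmax hx)

theorem eqOn_zero (hab : a ≤ b) (hH : IntegrableOn H (Icc a b))
    (h : IsWeakSolution H (Icc a b) y y') (hya : y a = 0) (hy'a : y' a = 0) :
    EqOn y 0 (Icc a b) := by
  set T := ∫ t in a..b, ‖H t‖
  have hT : 0 ≤ T := intervalIntegral.integral_nonneg hab fun t _ => norm_nonneg _
  have hHn : IntervalIntegrable (fun t => ‖H t‖) volume a b :=
    (intervalIntegrable_iff_integrableOn_Icc_of_le hab).2 hH.norm
  set δ := 1 / (T + 1)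
  have hδ : 0 < δ := by positivity
  -- on every step of length `δ` the local estimate applies, since `δ * ∫ ‖H‖ < 1`
  have step : ∀ n : ℕ, EqOn y 0 (Icc a (min b (a + n * δ))) := by
    intro n
    induction n with
    | zero =>
      intro x hx
      rw [CharP.cast_eq_zero, zero_mul, add_zero, min_eq_right hab] at hx
      rw [le_antisymm hx.2 hx.1, hya, Pi.zero_apply]
    | succ n ih =>
      set c := min b (a + n * δ)
      set d := min b (a + (n + 1 : ℕ) * δ)
      have hc : c ∈ Icc a b :=
        ⟨le_min hab (le_add_of_nonneg_right (by positivity)), min_le_left _ _⟩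
      have hcd : c ≤ d := min_le_min_left _ (by push_cast; linarith)
      have hdc : d - c ≤ δ := (le_abs_self _).trans <| (abs_min_sub_min_le_max _ _ _ _).trans <| by
        rw [sub_self, abs_zero, Nat.cast_succ, show a + (n + 1) * δ - (a + n * δ) = δ by ring,
          abs_of_pos hδ]
        exact max_le hδ.le le_rfl
      have hsub : Icc c d ⊆ Icc a b := Icc_subset_Icc hc.1 (min_le_left _ _)
      have hy'c : y' c = 0 := by
        have hint := h.2 a (left_mem_Icc.2 hab) c hc
        rw [hy'a, sub_zero] at hint
        rw [hint, intervalIntegral.integral_congr (g := fun _ => 0) fun t ht => ?_,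
          intervalIntegral.integral_zero]
        rw [uIcc_of_le hc.1] at ht
        simp [ih ht]
      have hsmall : (d - c) * ∫ t in c..d, ‖H t‖ < 1 := by
        have hI : ∫ t in c..d, ‖H t‖ ≤ T :=
          intervalIntegral.integral_mono_interval hc.1 hcd (min_le_left _ _)
            (Filter.Eventually.of_forall fun t => norm_nonneg _) hHn
        calc (d - c) * ∫ t in c..d, ‖H t‖ ≤ δ * T :=
              mul_le_mul hdc hI (intervalIntegral.integral_nonneg hcd fun t _ => norm_nonneg _)
                hδ.le
          _ < 1 := by rw [div_mul_eq_mul_div, one_mul, div_lt_one (by positivity)]; linarith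
      have hzero := eqOn_zero_of_mul_integral_lt_one hcd (hH.mono_set hsub) (h.mono hsub)
        (ih ⟨hc.1, le_rfl⟩) hy'c hsmall
      intro x hx
      rcases le_total x c with hxc | hxc
      · exact ih ⟨hx.1, hxc⟩
      · exact hzero ⟨hxc, hx.2⟩
  obtain ⟨n, hn⟩ := exists_nat_ge ((b - a) / δ)
  intro x hx
  refine step n ⟨hx.1, le_min hx.2 ?_⟩
  have := (div_le_iff₀ hδ).1 hn
  linarith [hx.2]

theorem comp_neg (h : IsWeakSolution H s y y') :
    IsWeakSolution (fun t => H (-t)) (-s) (fun t => y (-t)) (fun t => -y' (-t)) := by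
  refine ⟨fun x hx => ?_, fun x hx z hz => ?_⟩
  · simpa [Function.comp_def] using (h.1 (-x) hx).scomp x (hasDerivAt_neg x)
  · rw [intervalIntegral.integral_comp_neg (fun t => H t * y t), ← h.2 (-z) hz (-x) hx]
    ring

theorem conj (h : IsWeakSolution H s y y') :
    IsWeakSolution (fun t => starRingEnd ℂ (H t)) s (fun t => starRingEnd ℂ (y t))
      (fun t => starRingEnd ℂ (y' t)) := by
  refine ⟨fun x hx => (h.1 x hx).star, fun x hx z hz => ?_⟩
  simp_rw [← map_mul, intervalIntegral.intervalIntegral_conj, ← h.2 x hx z hz, map_sub]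

theorem congr [s.OrdConnected] {G : ℝ → ℂ} (h : IsWeakSolution H s y y') (hHG : EqOn H G s) :
    IsWeakSolution G s y y' := by
  refine ⟨h.1, fun x hx z hz => ?_⟩
  rw [h.2 x hx z hz]
  exact intervalIntegral.integral_congr fun t ht => by
    rw [hHG (Set.OrdConnected.uIcc_subset inferInstance hx hz ht)]

theorem const_mul (h : IsWeakSolution H s y y') (C : ℂ) :
    IsWeakSolution H s (fun t => C * y t) (fun t => C * y' t) := by
  refine ⟨fun x hx => (h.1 x hx).const_mul C, fun x hx z hz => ?_⟩
  rw [← mul_sub, h.2 x hx z hz, ← intervalIntegral.integral_const_mul]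
  simp_rw [mul_left_comm]

theorem sub (hH : IntegrableOn H (Icc a b)) (hy : IsWeakSolution H (Icc a b) y y')
    (hz : IsWeakSolution H (Icc a b) z z') :
    IsWeakSolution H (Icc a b) (fun t => y t - z t) (fun t => y' t - z' t) := by
  refine ⟨fun x hx => (hy.1 x hx).sub (hz.1 x hx), fun x hx x' hx' => ?_⟩
  rw [sub_sub_sub_comm, hy.2 x hx x' hx', hz.2 x hx x' hx',
    ← intervalIntegral.integral_sub
      (intervalIntegrable_mul_of_continuousOn hH hy.continuousOn hx hx')
      (intervalIntegrable_mul_of_continuousOn hH hz.continuousOn hx hx')]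
  simp_rw [mul_sub]

end IsWeakSolution

theorem IsEigenpair.isWeakSolution {q r : ℝ → ℝ} {lam : ℂ} {φ φ' : ℝ → ℂ}
    (hq : IntegrableOn q (Icc (-1:ℝ) 1)) (hr : IntegrableOn r (Icc (-1:ℝ) 1))
    (h : IsEigenpair q r lam φ φ') :
    IsWeakSolution (fun t => q t - lam * r t) (Icc (-1) 1) φ φ' := by
  have hH : IntegrableOn (fun t => (q t : ℂ) - lam * r t) (Icc (-1:ℝ) 1) :=
    hq.ofReal.sub (hr.ofReal.const_mul lam)
  have hφ : ContinuousOn φ (Icc (-1) 1) := fun x hx => (h.1 x hx).continuousAt.continuousWithinAt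
  have hm1 : (-1:ℝ) ∈ Icc (-1) 1 := left_mem_Icc.2 (by norm_num)
  have hint : ∀ x ∈ Icc (-1:ℝ) 1, φ' x = φ' (-1) + ∫ t in (-1:ℝ)..x, (q t - lam * r t) * φ t :=
    fun x hx => by simp_rw [h.2.1 x hx, sub_mul]
  refine ⟨h.1, fun x hx z hz => ?_⟩
  rw [hint z hz, hint x hx, add_sub_add_left_eq_sub, intervalIntegral.integral_interval_sub_left
    (intervalIntegrable_mul_of_continuousOn hH hφ hm1 hz)
    (intervalIntegrable_mul_of_continuousOn hH hφ hm1 hx)]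

theorem norm_eq_one_of_conj_comp_neg_eq_mul {f : ℝ → ℂ} {C : ℂ} {x : ℝ}
    (h₁ : starRingEnd ℂ (f (-x)) = C * f x) (h₂ : starRingEnd ℂ (f x) = C * f (-x))
    (hx : f x ≠ 0) : ‖C‖ = 1 := by
  have hCC : starRingEnd ℂ C * C = 1 := by
    refine mul_right_cancel₀ hx ?_
    rw [one_mul, mul_assoc, ← h₁, ← map_mul, ← h₂, conj_conj]
  rw [Complex.conj_mul'] at hCC
  exact (pow_eq_one_iff_of_nonneg (norm_nonneg C) two_ne_zero).1 (by exact_mod_cast hCC)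

theorem imaginary_eigenfunction_symmetry_general
    (q w : ℝ → ℝ)
    (hq : IntegrableOn q (Icc (-1:ℝ) 1))
    (hw : IntegrableOn w (Icc (-1:ℝ) 1))
    (hqsym : ∀ x ∈ Icc (-1:ℝ) 1, q (-x) = q x)
    (hwsym : ∀ x ∈ Icc (-1:ℝ) 1, w (-x) = -w x)
    (α : ℝ) (φ φ' : ℝ → ℂ)
    (heig : IsEigenpair q w (Complex.I * (α : ℂ)) φ φ') :
    ∃ C : ℂ, ‖C‖ = 1 ∧
      ∀ x ∈ Icc (-1:ℝ) 1, (starRingEnd ℂ) (φ (-x)) = C * φ x := by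
  have hH : IntegrableOn (fun t => (q t : ℂ) - I * α * w t) (Icc (-1:ℝ) 1) :=
    hq.ofReal.sub (hw.ofReal.const_mul _)
  have hφ := heig.isWeakSolution hq hw
  obtain ⟨-, -, hφm1, hφ1, x₀, hx₀, hφx₀⟩ := heig
  have hneg : -Icc (-1:ℝ) 1 = Icc (-1) 1 := by rw [neg_Icc, neg_neg]
  have hψ : IsWeakSolution (fun t => q t - I * α * w t) (Icc (-1) 1)
      (fun x => starRingEnd ℂ (φ (-x))) (fun x => starRingEnd ℂ (-φ' (-x))) :=
    (hneg ▸ hφ.comp_neg.conj).congr fun t ht => by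
      simp [hqsym t ht, hwsym t ht, sub_eq_add_neg]
  have hφ'm1 : φ' (-1) ≠ 0 := fun h0 =>
    hφx₀ (hφ.eqOn_zero (by norm_num) hH hφm1 h0 hx₀)
  set C := starRingEnd ℂ (-φ' 1) / φ' (-1)
  have hsymm : ∀ x ∈ Icc (-1:ℝ) 1, starRingEnd ℂ (φ (-x)) = C * φ x := fun x hx =>
    sub_eq_zero.1 <| (hψ.sub hH (hφ.const_mul C)).eqOn_zero (by norm_num) hH
      (by simp [hφm1, hφ1]) (by simp [C, div_mul_cancel₀ _ hφ'm1]) hx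
  refine ⟨C, norm_eq_one_of_conj_comp_neg_eq_mul (hsymm x₀ hx₀) ?_ hφx₀, hsymm⟩
  simpa using hsymm (-x₀) (hneg ▸ neg_mem_neg.2 hx₀)

/-- under the symmetry conditions, an eigenfunction `φ` of a nonzero
purely imaginary eigenvalue `iα` satisfies `conj (φ (-x)) = C φ(x)` for some
unimodular constant `C`. -/
theorem imaginary_eigenfunction_symmetry
    (q w : ℝ → ℝ)
    (hq : IntegrableOn q (Icc (-1:ℝ) 1))
    (hw : IntegrableOn w (Icc (-1:ℝ) 1))
    (hw0 : ∀ᵐ x ∂(volume.restrict (Icc (-1:ℝ) 1)), w x ≠ 0)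
    (hsign : 0 < volume {x ∈ Icc (-1:ℝ) 1 | 0 < w x} ∧
             0 < volume {x ∈ Icc (-1:ℝ) 1 | w x < 0})
    (hqsym : ∀ x ∈ Icc (-1:ℝ) 1, q (-x) = q x)
    (hwsym : ∀ x ∈ Icc (-1:ℝ) 1, w (-x) = -w x)
    (α : ℝ) (hα : α ≠ 0) (φ φ' : ℝ → ℂ)
    (heig : IsEigenpair q w (Complex.I * (α : ℂ)) φ φ') :
    ∃ C : ℂ, ‖C‖ = 1 ∧
      ∀ x ∈ Icc (-1:ℝ) 1, (starRingEnd ℂ) (φ (-x)) = C * φ x :=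
  imaginary_eigenfunction_symmetry_general q w hq hw hqsym hwsym α φ φ' heig
end
end

section
/- Suppose q(−x) = q(x) and w(−x) = −w(x) for x ∈ [−1,1]. If λ = iα with α ∈ ℝ, α ≠ 0, is an eigenvalue of the Dirichlet problem −y'' + q y = λ w y on [−1,1] with eigenfunction φ, then both |φ| and |φ'| are even functions: |φ(−x)| = |φ(x)| and |φ'(−x)| = |φ'(x)| for all x ∈ [−1,1]. -/
/-!
If `φ` is an eigenfunction for `iα`, then `ψ x = conj (φ (-x))` solves the same equation
`y'' = (q - iα w) y`, because `q` is even, `w` is odd and `conj (iα) = -iα`. Solutions of this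
linear equation with integrable coefficient are determined by their value and derivative at `-1`
(a Gronwall argument), and `φ (-1) = ψ (-1) = 0` with `φ' (-1) ≠ 0`, so `ψ = c φ`. Evaluating at
`x₀` and `-x₀` with `φ x₀ ≠ 0` gives `‖c‖ = 1`.
-/

open MeasureTheory Set Complex

noncomputable section

open Topology

theorem continuousOn_integral_of_integrableOn_Icc {E : Type*} [NormedAddCommGroup E]
    [NormedSpace ℝ E] {f : ℝ → E} {a b : ℝ} (hf : IntegrableOn f (Icc a b)) :
    ContinuousOn (fun x => ∫ t in a..x, f t) (Icc a b) := by
  rcases le_or_gt a b with hab | hab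
  · rw [← uIcc_of_le hab] at hf ⊢
    exact intervalIntegral.continuousOn_primitive_interval hf
  · simp [Icc_eq_empty_of_lt hab]

theorem eqOn_zero_of_le_integral_mul {a b : ℝ} {u k : ℝ → ℝ} (hu : ContinuousOn u (Icc a b))
    (hk : IntegrableOn k (Icc a b)) (hk0 : ∀ t ∈ Icc a b, 0 ≤ k t)
    (hu0 : ∀ t ∈ Icc a b, 0 ≤ u t) (h : ∀ x ∈ Icc a b, u x ≤ ∫ t in a..x, k t * u t) :
    EqOn u 0 (Icc a b) := by
  have hku : IntegrableOn (fun t => k t * u t) (Icc a b) := hk.mul_continuousOn hu isCompact_Icc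
  set F : ℝ → ℝ := fun x => ∫ t in a..x, k t * u t
  have hsub : ∀ x ∈ Icc a b, ∀ y ∈ Icc a b, F y - F x = ∫ t in x..y, k t * u t :=
    fun x hx y hy => intervalIntegral.integral_interval_sub_left
      (hku.mono_set (uIcc_subset_Icc (left_mem_Icc.2 (hx.1.trans hx.2)) hy)).intervalIntegrable
      (hku.mono_set (uIcc_subset_Icc (left_mem_Icc.2 (hx.1.trans hx.2)) hx)).intervalIntegrable
  have hmono : ∀ x ∈ Icc a b, ∀ y ∈ Icc a b, x ≤ y → F x ≤ F y := fun x hx y hy hxy => by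
    rw [← sub_nonneg, hsub x hx y hy]
    refine intervalIntegral.integral_nonneg hxy fun t ht => ?_
    have ht' : t ∈ Icc a b := ⟨hx.1.trans ht.1, ht.2.trans hy.2⟩
    exact mul_nonneg (hk0 t ht') (hu0 t ht')
  -- Gronwall: `F` is monotone and dominates `u`, so `F y - F x ≤ F y * ∫_x^y k`, and `F`
  -- cannot leave `0` on any interval where `∫ k < 1`.
  suffices Icc a b ⊆ F ⁻¹' {0} from fun x hx =>
    le_antisymm ((h x hx).trans_eq (this hx)) (hu0 x hx)
  refine IsClosed.Icc_subset_of_forall_mem_nhdsWithin ?_ (by simp [F]) ?_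
  · rw [inter_comm]
    exact (continuousOn_integral_of_integrableOn_Icc hku).preimage_isClosed_of_isClosed
      isClosed_Icc isClosed_singleton
  rintro x ⟨hFx, hx⟩
  have hxI : x ∈ Icc a b := Ico_subset_Icc_self hx
  have hsmall : ∀ᶠ y in 𝓝[>] x, ∫ t in x..y, k t < 1 := by
    have hG := continuousOn_integral_of_integrableOn_Icc
      (hk.mono_set (Icc_subset_Icc_left hx.1)) x (left_mem_Icc.2 hx.2.le)
    exact nhdsWithin_le_of_mem (Icc_mem_nhdsGT hx.2)
      (hG.eventually (gt_mem_nhds (by simp)))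
  filter_upwards [hsmall, Ioc_mem_nhdsGT hx.2] with y hy hyb
  have hyI : y ∈ Icc a b := ⟨hx.1.trans hyb.1.le, hyb.2⟩
  have hFy : F y ≤ (∫ t in x..y, k t) * F y := calc
    F y = ∫ t in x..y, k t * u t := by rw [← hsub x hxI y hyI, hFx, sub_zero]
    _ ≤ ∫ t in x..y, k t * F y := by
      refine intervalIntegral.integral_mono_on hyb.1.le
        (hku.mono_set (uIcc_subset_Icc hxI hyI)).intervalIntegrable
        ((hk.mono_set (uIcc_subset_Icc hxI hyI)).intervalIntegrable.mul_const _) fun t ht => ?_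
      have ht' : t ∈ Icc a b := ⟨hx.1.trans ht.1, ht.2.trans hyI.2⟩
      exact mul_le_mul_of_nonneg_left
        ((h t ht').trans (hmono t ht' y hyI ht.2)) (hk0 t ht')
    _ = (∫ t in x..y, k t) * F y := intervalIntegral.integral_mul_const _ _
  have hFy0 : 0 ≤ F y := by
    simpa [F] using hmono a (left_mem_Icc.2 (hx.1.trans hx.2.le)) y hyI hyI.1
  show F y = 0
  nlinarith

/-- `y` solves `y'' = p y` on `[a, b]`, in the integrated form of `IsEigenpair`. -/
structure IsSolutionOn (p : ℝ → ℂ) (a b : ℝ) (y y' : ℝ → ℂ) : Prop where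
  hasDerivAt : ∀ x ∈ Icc a b, HasDerivAt y (y' x) x
  deriv_eq : ∀ x ∈ Icc a b, y' x = y' a + ∫ t in a..x, p t * y t

namespace IsSolutionOn

variable {p : ℝ → ℂ} {a b : ℝ} {y y' z z' : ℝ → ℂ}

theorem continuousOn (h : IsSolutionOn p a b y y') : ContinuousOn y (Icc a b) :=
  fun x hx => (h.hasDerivAt x hx).continuousAt.continuousWithinAt

theorem integrableOn_mul (h : IsSolutionOn p a b y y') (hp : IntegrableOn p (Icc a b)) :
    IntegrableOn (fun t => p t * y t) (Icc a b) :=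
  hp.mul_continuousOn h.continuousOn isCompact_Icc

theorem intervalIntegrable_mul (h : IsSolutionOn p a b y y') (hp : IntegrableOn p (Icc a b))
    {x₁ x₂ : ℝ} (h₁ : x₁ ∈ Icc a b) (h₂ : x₂ ∈ Icc a b) :
    IntervalIntegrable (fun t => p t * y t) volume x₁ x₂ :=
  ((h.integrableOn_mul hp).mono_set (uIcc_subset_Icc h₁ h₂)).intervalIntegrable

theorem continuousOn_deriv (h : IsSolutionOn p a b y y') (hp : IntegrableOn p (Icc a b)) :
    ContinuousOn y' (Icc a b) :=
  (continuousOn_const.add (continuousOn_integral_of_integrableOn_Icc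
    (h.integrableOn_mul hp))).congr h.deriv_eq

theorem congr (h : IsSolutionOn p a b y y') {q : ℝ → ℂ} (hpq : EqOn p q (Icc a b)) :
    IsSolutionOn q a b y y' where
  hasDerivAt := h.hasDerivAt
  deriv_eq x hx := by
    rw [h.deriv_eq x hx, intervalIntegral.integral_congr fun t ht => ?_]
    rw [hpq (uIcc_subset_Icc (left_mem_Icc.2 (hx.1.trans hx.2)) hx ht)]

theorem sub_const_mul (hz : IsSolutionOn p a b z z') (hy : IsSolutionOn p a b y y')
    (hp : IntegrableOn p (Icc a b)) (c : ℂ) :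
    IsSolutionOn p a b (fun x => z x - c * y x) (fun x => z' x - c * y' x) where
  hasDerivAt x hx := (hz.hasDerivAt x hx).sub ((hy.hasDerivAt x hx).const_mul c)
  deriv_eq x hx := by
    have ha : a ∈ Icc a b := left_mem_Icc.2 (hx.1.trans hx.2)
    have hint : (∫ t in a..x, p t * (z t - c * y t))
        = (∫ t in a..x, p t * z t) - c * ∫ t in a..x, p t * y t := by
      rw [← intervalIntegral.integral_const_mul,
        ← intervalIntegral.integral_sub (hz.intervalIntegrable_mul hp ha hx)
          ((hy.intervalIntegrable_mul hp ha hx).const_mul c)]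
      congr 1 with t
      ring
    rw [hz.deriv_eq x hx, hy.deriv_eq x hx, hint]
    ring

theorem star (h : IsSolutionOn p a b y y') :
    IsSolutionOn (fun x => star (p x)) a b (fun x => star (y x)) (fun x => star (y' x)) where
  hasDerivAt x hx := (h.hasDerivAt x hx).star
  deriv_eq x hx := by
    simp only [h.deriv_eq x hx, ← starRingEnd_apply, map_add,
      ← intervalIntegral.intervalIntegral_conj, map_mul]

theorem comp_neg (h : IsSolutionOn p a b y y') (hp : IntegrableOn p (Icc a b)) :
    IsSolutionOn (fun x => p (-x)) (-b) (-a) (fun x => y (-x)) (fun x => -y' (-x)) where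
  hasDerivAt x hx := by
    simpa [Function.comp_def] using
      (h.hasDerivAt (-x) (neg_mem_Icc_iff.2 hx)).scomp x (hasDerivAt_neg x)
  deriv_eq x hx := by
    have hb : b ∈ Icc a b := right_mem_Icc.2 (neg_le_neg_iff.1 (hx.1.trans hx.2))
    have hx' : -x ∈ Icc a b := neg_mem_Icc_iff.2 hx
    rw [intervalIntegral.integral_comp_neg (fun t => p t * y t), neg_neg,
      ← intervalIntegral.integral_interval_sub_left
        (h.intervalIntegrable_mul hp (left_mem_Icc.2 (hx'.1.trans hx'.2)) hb)
        (h.intervalIntegrable_mul hp (left_mem_Icc.2 (hx'.1.trans hx'.2)) hx'),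
      h.deriv_eq b hb, h.deriv_eq (-x) hx']
    ring

theorem eqOn_zero (h : IsSolutionOn p a b y y') (hp : IntegrableOn p (Icc a b)) (ha : y a = 0)
    (ha' : y' a = 0) : EqOn y 0 (Icc a b) ∧ EqOn y' 0 (Icc a b) := by
  have hy' := h.continuousOn_deriv hp
  set u : ℝ → ℝ := fun t => ‖y t‖ + ‖y' t‖
  set k : ℝ → ℝ := fun t => 1 + ‖p t‖
  have hu : ContinuousOn u (Icc a b) := h.continuousOn.norm.add hy'.norm
  have hk : IntegrableOn k (Icc a b) :=
    (integrableOn_const (C := (1 : ℝ)) measure_Icc_lt_top.ne).add hp.norm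
  have hku : IntegrableOn (fun t => k t * u t) (Icc a b) := hk.mul_continuousOn hu isCompact_Icc
  have hbound : ∀ x ∈ Icc a b, u x ≤ ∫ t in a..x, k t * u t := by
    intro x hx
    have hsub : uIcc a x ⊆ Icc a b := uIcc_subset_Icc (left_mem_Icc.2 (hx.1.trans hx.2)) hx
    have hy'I : IntervalIntegrable y' volume a x := (hy'.mono hsub).intervalIntegrable
    have hpyI : IntervalIntegrable (fun t => ‖p t * y t‖) volume a x :=
      ((h.integrableOn_mul hp).mono_set hsub).intervalIntegrable.norm
    have h1 : ‖y x‖ ≤ ∫ t in a..x, ‖y' t‖ := by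
      rw [← sub_zero (y x), ← ha, ← intervalIntegral.integral_eq_sub_of_hasDerivAt
        (fun t ht => h.hasDerivAt t (hsub ht)) hy'I]
      exact intervalIntegral.norm_integral_le_integral_norm hx.1
    have h2 : ‖y' x‖ ≤ ∫ t in a..x, ‖p t * y t‖ := by
      rw [h.deriv_eq x hx, ha', zero_add]
      exact intervalIntegral.norm_integral_le_integral_norm hx.1
    calc u x ≤ (∫ t in a..x, ‖y' t‖) + ∫ t in a..x, ‖p t * y t‖ := add_le_add h1 h2
      _ = ∫ t in a..x, (‖y' t‖ + ‖p t * y t‖) :=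
        (intervalIntegral.integral_add hy'I.norm hpyI).symm
      _ ≤ ∫ t in a..x, k t * u t := by
        refine intervalIntegral.integral_mono_on hx.1 (hy'I.norm.add hpyI)
          (hku.mono_set hsub).intervalIntegrable fun t _ => ?_
        simp only [k, u, norm_mul]
        nlinarith [norm_nonneg (y t), norm_nonneg (p t), norm_nonneg (y' t)]
  have hzero : EqOn u 0 (Icc a b) := eqOn_zero_of_le_integral_mul hu hk
    (fun t _ => by positivity) (fun t _ => by positivity) hbound
  have hnorm : ∀ x ∈ Icc a b, ‖y x‖ = 0 ∧ ‖y' x‖ = 0 := fun x hx =>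
    (add_eq_zero_iff_of_nonneg (norm_nonneg _) (norm_nonneg _)).1 (hzero hx)
  exact ⟨fun x hx => norm_eq_zero.1 (hnorm x hx).1, fun x hx => norm_eq_zero.1 (hnorm x hx).2⟩

theorem exists_eq_const_mul (hz : IsSolutionOn p a b z z') (hy : IsSolutionOn p a b y y')
    (hp : IntegrableOn p (Icc a b)) (hza : z a = 0) (hya : y a = 0) (hy'a : y' a ≠ 0) :
    ∃ c : ℂ, ∀ x ∈ Icc a b, z x = c * y x ∧ z' x = c * y' x := by
  refine ⟨z' a / y' a, fun x hx => ?_⟩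
  obtain ⟨h0, h0'⟩ := (hz.sub_const_mul hy hp (z' a / y' a)).eqOn_zero hp
    (by simp [hza, hya]) (by simp [div_mul_cancel₀ _ hy'a])
  exact ⟨sub_eq_zero.1 (h0 hx), sub_eq_zero.1 (h0' hx)⟩

end IsSolutionOn

theorem IsEigenpair.isSolutionOn {q r : ℝ → ℝ} {lam : ℂ} {φ φ' : ℝ → ℂ}
    (h : IsEigenpair q r lam φ φ') :
    IsSolutionOn (fun t => q t - lam * r t) (-1) 1 φ φ' where
  hasDerivAt := h.1
  deriv_eq x hx := by
    rw [h.2.1 x hx]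
    congr 2 with t
    ring

theorem eigenfunction_modulus_even_general
    (q w : ℝ → ℝ)
    (hq : IntegrableOn q (Icc (-1:ℝ) 1))
    (hw : IntegrableOn w (Icc (-1:ℝ) 1))
    (hqsym : ∀ x ∈ Icc (-1:ℝ) 1, q (-x) = q x)
    (hwsym : ∀ x ∈ Icc (-1:ℝ) 1, w (-x) = -w x)
    (α : ℝ) (φ φ' : ℝ → ℂ)
    (heig : IsEigenpair q w (Complex.I * (α : ℂ)) φ φ') :
    ∀ x ∈ Icc (-1:ℝ) 1, ‖φ (-x)‖ = ‖φ x‖ ∧ ‖φ' (-x)‖ = ‖φ' x‖ := by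
  set p : ℝ → ℂ := fun t => q t - Complex.I * α * w t
  have hp : IntegrableOn p (Icc (-1) 1) := hq.ofReal.sub (hw.ofReal.const_mul _)
  have hφ : IsSolutionOn p (-1) 1 φ φ' := heig.isSolutionOn
  obtain ⟨-, -, hφa, hφb, x₀, hx₀, hφx₀⟩ := heig
  have hψ : IsSolutionOn p (-1) 1 (fun x => star (φ (-x))) (fun x => star (-φ' (-x))) := by
    have h := (hφ.comp_neg hp).star
    rw [neg_neg] at h
    refine h.congr fun x hx => ?_
    simp [p, hqsym x hx, hwsym x hx, sub_eq_add_neg]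
  have hφ'a : φ' (-1) ≠ 0 := fun h0 => hφx₀ ((hφ.eqOn_zero hp hφa h0).1 hx₀)
  obtain ⟨c, hc⟩ := hψ.exists_eq_const_mul hφ hp (by simp [hφb]) hφa hφ'a
  have hnorm : ∀ x ∈ Icc (-1:ℝ) 1, ‖φ (-x)‖ = ‖c‖ * ‖φ x‖ ∧ ‖φ' (-x)‖ = ‖c‖ * ‖φ' x‖ :=
    fun x hx => ⟨by simpa using congr_arg norm (hc x hx).1,
      by simpa using congr_arg norm (hc x hx).2⟩
  have hc1 : ‖c‖ = 1 := by
    have h₁ := (hnorm x₀ hx₀).1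
    have h₂ := (hnorm (-x₀) (by rwa [neg_mem_Icc_iff, neg_neg])).1
    rw [neg_neg, h₁, ← mul_assoc] at h₂
    have : ‖c‖ * ‖c‖ = 1 := (mul_eq_right₀ (norm_ne_zero_iff.2 hφx₀)).1 h₂.symm
    nlinarith [norm_nonneg c]
  intro x hx
  simp only [hnorm x hx, hc1, one_mul, and_self]

/-- under the symmetry conditions, an eigenfunction `φ` of a nonzero
purely imaginary eigenvalue `iα` has `|φ|` and `|φ'|` even. -/
theorem eigenfunction_modulus_even
    (q w : ℝ → ℝ)
    (hq : IntegrableOn q (Icc (-1:ℝ) 1))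
    (hw : IntegrableOn w (Icc (-1:ℝ) 1))
    (hw0 : ∀ᵐ x ∂(volume.restrict (Icc (-1:ℝ) 1)), w x ≠ 0)
    (hsign : 0 < volume {x ∈ Icc (-1:ℝ) 1 | 0 < w x} ∧
             0 < volume {x ∈ Icc (-1:ℝ) 1 | w x < 0})
    (hqsym : ∀ x ∈ Icc (-1:ℝ) 1, q (-x) = q x)
    (hwsym : ∀ x ∈ Icc (-1:ℝ) 1, w (-x) = -w x)
    (α : ℝ) (hα : α ≠ 0) (φ φ' : ℝ → ℂ)
    (heig : IsEigenpair q w (Complex.I * (α : ℂ)) φ φ') :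
    ∀ x ∈ Icc (-1:ℝ) 1, ‖φ (-x)‖ = ‖φ x‖ ∧ ‖φ' (-x)‖ = ‖φ' x‖ :=
  eigenfunction_modulus_even_general q w hq hw hqsym hwsym α φ φ' heig
end
end
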